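/- arXiv:1712.05740 — 10 statements merged into one kernel-verified Lean document; each statement's English description precedes it below -/
import Mathlib

section
/- For a linear system with transfer function H(s) = C (sE - A)^{-1} B, the Loewner matrix with entries L_{ji} = (v_j r_i - ℓ_j w_i)/(μ_j - λ_i), where v_j^T = ℓ_j^T H(μ_j) and w_i = H(λ_i) r_i, factors as L = -O E R, where O is the generalized observability matrix with rows C(μ_j E - A)^{-1} and R is the generalized controllability matrix with columns (λ_i E - A)^{-1} B. -/
/-!
With `M(s) = sE - A`, the pencil identity `M(λ) - M(μ) = (λ - μ) E` turns the resolvent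
identity `X⁻¹ - Y⁻¹ = X⁻¹ (Y - X) Y⁻¹` into
`M(μ)⁻¹ - M(λ)⁻¹ = (λ - μ) M(μ)⁻¹ E M(λ)⁻¹`.
Sandwiching it between `ℓ_j^T C` and `B r_i` shows that the numerator of the Loewner entry
is `(λ_i - μ_j)` times the `(j, i)` entry of `O E R`.
-/

open Matrix

namespace Matrix

section

variable {α β ι ι' κ ν K : Type*} [Fintype α] [Fintype β] [Fintype ι]

theorem vecMul_dotProduct_sub_dotProduct_mulVec [Ring K] (u : α → K) (v : β → K)
    (C : Matrix α ι K) (X Y : Matrix ι ι K) (B : Matrix ι β K) :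
    (u ᵥ* (C * X * B)) ⬝ᵥ v - u ⬝ᵥ ((C * Y * B) *ᵥ v) = u ⬝ᵥ ((C * (X - Y) * B) *ᵥ v) := by
  rw [dotProduct_mulVec, dotProduct_mulVec, ← sub_dotProduct, ← vecMul_sub, ← Matrix.sub_mul,
    ← Matrix.mul_sub]

theorem mul_mul_apply_of_row_of_col [Fintype ι'] [Semiring K] {O : Matrix κ ι K}
    {M : Matrix ι ι' K} {R : Matrix ι' ν K} {j : κ} {i : ν} {u : α → K} {v : β → K}
    {X : Matrix α ι K} {Y : Matrix ι' β K}
    (hO : O j = u ᵥ* X) (hR : Rᵀ i = Y *ᵥ v) :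
    (O * M * R) j i = u ⬝ᵥ ((X * M * Y) *ᵥ v) :=
  calc (O * M * R) j i = (O j ᵥ* M) ⬝ᵥ Rᵀ i := rfl
    _ = ((u ᵥ* X) ᵥ* M) ⬝ᵥ (Y *ᵥ v) := by rw [hO, hR]
    _ = u ⬝ᵥ ((X * M * Y) *ᵥ v) := by
      rw [vecMul_vecMul, dotProduct_mulVec, vecMul_vecMul, ← dotProduct_mulVec]

end

theorem pencil_inv_sub_inv {ι K : Type*} [Fintype ι] [DecidableEq ι] [CommRing K]
    {E A : Matrix ι ι K} {a b : K} (ha : IsUnit (a • E - A)) (hb : IsUnit (b • E - A)) :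
    (a • E - A)⁻¹ - (b • E - A)⁻¹ = (b - a) • ((a • E - A)⁻¹ * E * (b • E - A)⁻¹) := by
  rw [inv_sub_inv (iff_of_true ha hb), sub_sub_sub_cancel_right, ← sub_smul,
    Matrix.mul_smul, Matrix.smul_mul]

end Matrix

theorem loewner_factorization_general
    {n m p q k : ℕ}
    (E A : Matrix (Fin n) (Fin n) ℂ)
    (B : Matrix (Fin n) (Fin m) ℂ)
    (C : Matrix (Fin p) (Fin n) ℂ)
    (μ : Fin q → ℂ) (lam : Fin k → ℂ)
    (ell : Fin q → Fin p → ℂ) (r : Fin k → Fin m → ℂ)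
    (hμ : ∀ j, IsUnit (μ j • E - A))
    (hlam : ∀ i, IsUnit (lam i • E - A))
    (hdist : ∀ j i, μ j ≠ lam i)
    (O : Matrix (Fin q) (Fin n) ℂ)
    (R : Matrix (Fin n) (Fin k) ℂ)
    (hO : ∀ j x, O j x = (ell j ᵥ* (C * (μ j • E - A)⁻¹)) x)
    (hR : ∀ i x, R x i = (((lam i • E - A)⁻¹ * B) *ᵥ r i) x) :
    (Matrix.of fun j i =>
      ((ell j ᵥ* (C * (μ j • E - A)⁻¹ * B)) ⬝ᵥ r i
        - ell j ⬝ᵥ ((C * (lam i • E - A)⁻¹ * B) *ᵥ r i)) / (μ j - lam i))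
      = -(O * E * R) := by
  ext j i
  have hne : μ j - lam i ≠ 0 := sub_ne_zero.mpr (hdist j i)
  have hOj : O j = ell j ᵥ* (C * (μ j • E - A)⁻¹) := funext (hO j)
  have hRi : Rᵀ i = ((lam i • E - A)⁻¹ * B) *ᵥ r i := funext (hR i)
  rw [of_apply, neg_apply, mul_mul_apply_of_row_of_col hOj hRi,
    vecMul_dotProduct_sub_dotProduct_mulVec, pencil_inv_sub_inv (hμ j) (hlam i),
    Matrix.mul_smul, Matrix.smul_mul, smul_mulVec,
    dotProduct_smul, smul_eq_mul, div_eq_iff hne]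
  simp only [Matrix.mul_assoc]
  ring

/-- The Loewner matrix `L` with entries `(v_j ⬝ r_i - ℓ_j ⬝ w_i)/(μ_j - λ_i)`,
where `v_j^T = ℓ_j^T H(μ_j)` and `w_i = H(λ_i) r_i` for `H(s) = C (sE - A)⁻¹ B`,
factors as `L = -O E R`. -/
theorem loewner_factorization
    {n m p q k : ℕ}
    (E A : Matrix (Fin n) (Fin n) ℂ)
    (B : Matrix (Fin n) (Fin m) ℂ)
    (C : Matrix (Fin p) (Fin n) ℂ)
    (μ : Fin q → ℂ) (lam : Fin k → ℂ)
    (ell : Fin q → Fin p → ℂ) (r : Fin k → Fin m → ℂ)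
    (hμ : ∀ j, IsUnit (μ j • E - A))
    (hlam : ∀ i, IsUnit (lam i • E - A))
    (hμinj : Function.Injective μ) (hlaminj : Function.Injective lam)
    (hdist : ∀ j i, μ j ≠ lam i)
    (O : Matrix (Fin q) (Fin n) ℂ)
    (R : Matrix (Fin n) (Fin k) ℂ)
    (hO : ∀ j x, O j x = (ell j ᵥ* (C * (μ j • E - A)⁻¹)) x)
    (hR : ∀ i x, R x i = (((lam i • E - A)⁻¹ * B) *ᵥ r i) x) :
    (Matrix.of fun j i =>
      ((ell j ᵥ* (C * (μ j • E - A)⁻¹ * B)) ⬝ᵥ r i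
        - ell j ⬝ᵥ ((C * (lam i • E - A)⁻¹ * B) *ᵥ r i)) / (μ j - lam i))
      = -(O * E * R) :=
  loewner_factorization_general E A B C μ lam ell r hμ hlam hdist O R hO hR
end

section
/- The shifted Loewner matrix with entries (L_s)_{ji} = (μ_j v_j r_i - ℓ_j w_i λ_i)/(μ_j - λ_i) factors as L_s = -O A R, where O and R are the generalized observability and controllability matrices. -/
open Matrix

/-- The Loewner matrix `L` with entries `(v_j ⬝ r_i - ℓ_j ⬝ w_i)/(μ_j - λ_i)`,
where `v_j^T = ℓ_j^T H(μ_j)` and `w_i = H(λ_i) r_i` for `H(s) = C (sE - A)⁻¹ B`,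
factors as `L = -O E R`. -/
theorem shifted_loewner_factorization
    {n m p q k : ℕ}
    (E A : Matrix (Fin n) (Fin n) ℂ)
    (B : Matrix (Fin n) (Fin m) ℂ)
    (C : Matrix (Fin p) (Fin n) ℂ)
    (μ : Fin q → ℂ) (lam : Fin k → ℂ)
    (ell : Fin q → Fin p → ℂ) (r : Fin k → Fin m → ℂ)
    (hμ : ∀ j, IsUnit (μ j • E - A))
    (hlam : ∀ i, IsUnit (lam i • E - A))
    (hμinj : Function.Injective μ) (hlaminj : Function.Injective lam)
    (hdist : ∀ j i, μ j ≠ lam i)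
    (O : Matrix (Fin q) (Fin n) ℂ)
    (R : Matrix (Fin n) (Fin k) ℂ)
    (hO : ∀ j x, O j x = (ell j ᵥ* (C * (μ j • E - A)⁻¹)) x)
    (hR : ∀ i x, R x i = (((lam i • E - A)⁻¹ * B) *ᵥ r i) x) :
    (Matrix.of fun j i =>
      (μ j * ((ell j ᵥ* (C * (μ j • E - A)⁻¹ * B)) ⬝ᵥ r i)
        - (ell j ⬝ᵥ ((C * (lam i • E - A)⁻¹ * B) *ᵥ r i)) * lam i) / (μ j - lam i))
      = -(O * A * R) := by
  ext j i
  set X := μ j • E - A with hXdef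
  set Y := lam i • E - A with hYdef
  have hXd : IsUnit X.det := (Matrix.isUnit_iff_isUnit_det X).mp (hμ j)
  have hYd : IsUnit Y.det := (Matrix.isUnit_iff_isUnit_det Y).mp (hlam i)
  -- key matrix identity
  have key : (lam i - μ j) • (X⁻¹ * A * Y⁻¹) = μ j • X⁻¹ - lam i • Y⁻¹ := by
    have hA : (lam i - μ j) • A = μ j • Y - lam i • X := by
      rw [hXdef, hYdef]
      simp [smul_sub, smul_smul, mul_comm, sub_smul]
    calc (lam i - μ j) • (X⁻¹ * A * Y⁻¹)
        = X⁻¹ * ((lam i - μ j) • A) * Y⁻¹ := by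
          simp [Matrix.mul_smul, Matrix.smul_mul]
      _ = μ j • (X⁻¹ * (Y * Y⁻¹)) - lam i • (X⁻¹ * X * Y⁻¹) := by
          rw [hA]; simp [Matrix.sub_mul, Matrix.mul_sub, Matrix.mul_smul,
            Matrix.smul_mul, Matrix.mul_assoc]
      _ = μ j • X⁻¹ - lam i • Y⁻¹ := by
          rw [Matrix.mul_nonsing_inv _ hYd, Matrix.nonsing_inv_mul _ hXd]
          simp
  -- scalar functional
  set g : Matrix (Fin n) (Fin n) ℂ → ℂ := fun M => (ell j ᵥ* (C * M * B)) ⬝ᵥ r i with hg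
  have hOAR : (O * A * R) j i = g (X⁻¹ * A * Y⁻¹) := by
    have hOrow : O j = ell j ᵥ* (C * X⁻¹) := funext fun x => hO j x
    have hRcol : (fun y => R y i) = (Y⁻¹ * B) *ᵥ r i := funext fun x => hR i x
    have : (O * A * R) j i = (O j ᵥ* A) ⬝ᵥ fun y => R y i := by
      simp [Matrix.mul_apply, Matrix.vecMul, dotProduct, Finset.sum_mul,
        Finset.mul_sum]
    rw [this, hOrow, hRcol, Matrix.vecMul_vecMul, Matrix.dotProduct_mulVec,
      Matrix.vecMul_vecMul, hg]
    simp [Matrix.mul_assoc]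
  have hgkey : (lam i - μ j) * g (X⁻¹ * A * Y⁻¹) = μ j * g X⁻¹ - lam i * g Y⁻¹ := by
    have : g ((lam i - μ j) • (X⁻¹ * A * Y⁻¹)) = g (μ j • X⁻¹ - lam i • Y⁻¹) := by
      rw [key]
    have hsm : ∀ (a : ℂ) (M : Matrix (Fin p) (Fin m) ℂ),
        (ell j ᵥ* (a • M)) ⬝ᵥ r i = a * ((ell j ᵥ* M) ⬝ᵥ r i) := by
      intro a M
      simp only [Matrix.vecMul, dotProduct, Matrix.smul_apply, smul_eq_mul]
      rw [Finset.mul_sum]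
      refine Finset.sum_congr rfl fun y _ => ?_
      rw [Finset.sum_mul, Finset.sum_mul, Finset.mul_sum]
      refine Finset.sum_congr rfl fun x _ => ?_
      ring
    simp only [hg, Matrix.mul_smul, Matrix.smul_mul, Matrix.mul_sub, Matrix.sub_mul,
      Matrix.vecMul_sub, sub_dotProduct, hsm] at this
    simpa [hg] using this
  have hterm2 : ell j ⬝ᵥ ((C * Y⁻¹ * B) *ᵥ r i) = g Y⁻¹ := by
    rw [Matrix.dotProduct_mulVec, hg]
  have hne : μ j - lam i ≠ 0 := sub_ne_zero.mpr (hdist j i)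
  rw [Matrix.of_apply, Matrix.neg_apply, hOAR, hterm2]
  show (μ j * g X⁻¹ - g Y⁻¹ * lam i) / (μ j - lam i) = -(g (X⁻¹ * A * Y⁻¹))
  rw [div_eq_iff hne]
  linear_combination -hgkey
end

section
/- If k = q and the Loewner pencil (L_s, L) is regular with none of the interpolation points λ_i, μ_j being eigenvalues of the pencil, then the rational function H(s) = W (L_s - s L)^{-1} V interpolates the tangential data: ℓ_j^T H(μ_j) = v_j^T for all j and H(λ_i) r_i = w_i for all i. -/
open Matrix

/-- If `k = q` and the Loewner pencil `(L_s, L)` built from tangential data is regular,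
with none of the interpolation points an eigenvalue of the pencil, then
`H(s) = W (L_s - s L)⁻¹ V` interpolates the data:
`ℓ_j^T H(μ_j) = v_j^T` and `H(λ_i) r_i = w_i`. -/
theorem loewner_interpolation
    {m p k : ℕ}
    (μ lam : Fin k → ℂ)
    (ell : Fin k → Fin p → ℂ) (v : Fin k → Fin m → ℂ)
    (r : Fin k → Fin m → ℂ) (w : Fin k → Fin p → ℂ)
    (hμinj : Function.Injective μ) (hlaminj : Function.Injective lam)
    (hdist : ∀ j i, μ j ≠ lam i)
    (L Ls : Matrix (Fin k) (Fin k) ℂ)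
    (hL : ∀ j i, L j i = (v j ⬝ᵥ r i - ell j ⬝ᵥ w i) / (μ j - lam i))
    (hLs : ∀ j i, Ls j i = (μ j * (v j ⬝ᵥ r i) - (ell j ⬝ᵥ w i) * lam i) / (μ j - lam i))
    (V : Matrix (Fin k) (Fin m) ℂ) (hV : ∀ j x, V j x = v j x)
    (W : Matrix (Fin p) (Fin k) ℂ) (hW : ∀ i x, W x i = w i x)
    (hregL : ∀ i, IsUnit (Ls - lam i • L))
    (hregM : ∀ j, IsUnit (Ls - μ j • L)) :
    (∀ j, ell j ᵥ* (W * (Ls - μ j • L)⁻¹ * V) = v j) ∧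
    (∀ i, (W * (Ls - lam i • L)⁻¹ * V) *ᵥ r i = w i) := by
  have hrowμ : ∀ j i, (Ls - μ j • L) j i = ell j ⬝ᵥ w i := by
    intro j i
    have hne : μ j - lam i ≠ 0 := sub_ne_zero.mpr (hdist j i)
    simp only [Matrix.sub_apply, Matrix.smul_apply, smul_eq_mul, hL, hLs]
    field_simp
    ring
  have hcolLam : ∀ j i, (Ls - lam i • L) j i = v j ⬝ᵥ r i := by
    intro j i
    have hne : μ j - lam i ≠ 0 := sub_ne_zero.mpr (hdist j i)
    simp only [Matrix.sub_apply, Matrix.smul_apply, smul_eq_mul, hL, hLs]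
    field_simp
    ring
  refine ⟨fun j => ?_, fun i => ?_⟩
  · have hA := hregM j
    set A := Ls - μ j • L with hAdef
    have hdet : IsUnit A.det := (Matrix.isUnit_iff_isUnit_det A).mp hA
    have h1 : ell j ᵥ* W = Pi.single j 1 ᵥ* A := by
      funext i
      simp only [Matrix.vecMul, dotProduct, hW, Pi.single_apply, ite_mul,
        one_mul, zero_mul, Finset.sum_ite_eq', Finset.mem_univ, if_true]
      rw [hAdef, hrowμ j i, dotProduct]
    have key : ell j ᵥ* (W * A⁻¹ * V) = Pi.single j 1 ᵥ* (A * A⁻¹ * V) := by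
      simp only [← Matrix.vecMul_vecMul]; rw [h1]
    rw [key, Matrix.mul_nonsing_inv A hdet, Matrix.one_mul]
    funext x
    simp [Matrix.vecMul, dotProduct, Pi.single_apply, ite_mul, hV]
  · have hA := hregL i
    set A := Ls - lam i • L with hAdef
    have hdet : IsUnit A.det := (Matrix.isUnit_iff_isUnit_det A).mp hA
    have h1 : V *ᵥ r i = A *ᵥ Pi.single i 1 := by
      funext j
      simp only [Matrix.mulVec, dotProduct, hV, Pi.single_apply, mul_ite,
        mul_one, mul_zero, Finset.sum_ite_eq, Finset.sum_ite_eq', Finset.mem_univ, if_true]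
      rw [hAdef, hcolLam j i, dotProduct]
    have key : (W * A⁻¹ * V) *ᵥ r i = (W * (A⁻¹ * A)) *ᵥ Pi.single i 1 := by
      simp only [← Matrix.mulVec_mulVec, Matrix.mul_assoc]; rw [h1]
    rw [key, Matrix.nonsing_inv_mul A hdet, Matrix.mul_one]
    funext x
    simp [Matrix.mulVec, dotProduct, Pi.single_apply, mul_ite, hW]
end

section
/- The generalized controllability matrices R_1, R_2 of a two-mode LSS, built column-wise by the recursion R_1^{(1)} = Φ_1(λ_1) B_1, R_2^{(1)} = Φ_2(λ_2) B_2, R_1^{(j)} = Φ_1(λ_{2j-1}) K_2 R_2^{(j-1)}, R_2^{(j)} = Φ_2(λ_{2j}) K_1 R_1^{(j-1)} for j = 2,...,k, satisfy the coupled Sylvester equations A_1 R_1 + K_2 R_2 S + B_1 e_1^T = E_1 R_1 Λ_1 and A_2 R_2 + K_1 R_1 S + B_2 e_1^T = E_2 R_2 Λ_2, where Λ_1 = diag(λ_1, λ_3, ..., λ_{2k-1}), Λ_2 = diag(λ_2, λ_4, ..., λ_{2k}), S is the k×k upper-shift Jordan nilpotent matrix, and e_1 is the first standard basis vector. -/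
open Matrix

lemma sylv_aux {n m k : ℕ}
    (E A : Matrix (Fin n) (Fin n) ℂ) (B : Matrix (Fin n) (Fin 1) ℂ)
    (K : Matrix (Fin n) (Fin m) ℂ) (c : Fin k → ℂ)
    (hc : ∀ j, IsUnit (c j • E - A))
    (R : Matrix (Fin n) (Fin k) ℂ) (R' : Matrix (Fin m) (Fin k) ℂ) (hk : 0 < k)
    (h0 : ∀ x, R x ⟨0, hk⟩ = ((c ⟨0, hk⟩ • E - A)⁻¹ * B) x 0)
    (hs : ∀ (j : ℕ) (h : j + 1 < k) (x : Fin n),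
      R x ⟨j + 1, h⟩ =
        (((c ⟨j + 1, h⟩ • E - A)⁻¹ * K) *ᵥ (fun y => R' y ⟨j, Nat.lt_of_succ_lt h⟩)) x)
    (S : Matrix (Fin k) (Fin k) ℂ)
    (hS : ∀ i j : Fin k, S i j = if (i : ℕ) + 1 = (j : ℕ) then 1 else 0)
    (e₁ : Matrix (Fin 1) (Fin k) ℂ)
    (he₁ : ∀ j : Fin k, e₁ 0 j = if (j : ℕ) = 0 then 1 else 0) :
    A * R + K * R' * S + B * e₁ = E * R * Matrix.diagonal c := by
  have hinv : ∀ j : Fin k, (c j • E - A) * (c j • E - A)⁻¹ = 1 := fun j =>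
    Matrix.mul_nonsing_inv _ ((Matrix.isUnit_iff_isUnit_det _).mp (hc j))
  -- key column identity
  have hcol : ∀ (j : Fin k) (x : Fin n),
      ((c j • E - A) *ᵥ fun y => R y j) x =
        (if h : (j : ℕ) = 0 then B x 0
         else (K *ᵥ fun y => R' y ⟨(j : ℕ) - 1, Nat.lt_of_le_of_lt (Nat.sub_le _ _) j.2⟩) x) := by
    intro j x
    obtain ⟨jv, hj⟩ := j
    cases jv with
    | zero =>
      simp only [dif_pos rfl]
      have h1 : (fun y => R y ⟨0, hj⟩) = (c ⟨0, hj⟩ • E - A)⁻¹ *ᵥ (fun y => B y 0) := by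
        funext y
        rw [h0 y]
        simp [Matrix.mul_apply, Matrix.mulVec, dotProduct]
      rw [h1, Matrix.mulVec_mulVec, hinv, Matrix.one_mulVec]
      simp
    | succ jp =>
      simp only [dif_neg (Nat.succ_ne_zero jp)]
      have h1 : (fun y => R y ⟨jp + 1, hj⟩) =
          (c ⟨jp + 1, hj⟩ • E - A)⁻¹ *ᵥ (K *ᵥ fun y => R' y ⟨jp, Nat.lt_of_succ_lt hj⟩) := by
        funext y
        rw [hs jp hj y, ← Matrix.mulVec_mulVec]
      rw [h1, Matrix.mulVec_mulVec, Matrix.mulVec_mulVec, hinv, Matrix.one_mul]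
      simp
  ext x j
  have key := hcol j x
  rw [Matrix.sub_mulVec, Matrix.smul_mulVec] at key
  have hER : (E *ᵥ fun y => R y j) x = (E * R) x j := by
    simp [Matrix.mul_apply, Matrix.mulVec, dotProduct]
  have hAR : (A *ᵥ fun y => R y j) x = (A * R) x j := by
    simp [Matrix.mul_apply, Matrix.mulVec, dotProduct]
  simp only [Pi.sub_apply, Pi.smul_apply, smul_eq_mul, hER, hAR] at key
  -- compute the S and e₁ terms
  have hSterm : (K * R' * S) x j =
      (if h : (j : ℕ) = 0 then 0
       else (K *ᵥ fun y => R' y ⟨(j : ℕ) - 1, Nat.lt_of_le_of_lt (Nat.sub_le _ _) j.2⟩) x) := by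
    rw [Matrix.mul_apply]
    split_ifs with h
    · apply Finset.sum_eq_zero
      intro l _
      rw [hS, if_neg (by omega), mul_zero]
    · obtain ⟨jv, hj⟩ := j
      simp only at h
      obtain ⟨jp, rfl⟩ := Nat.exists_eq_succ_of_ne_zero h
      rw [Finset.sum_eq_single (⟨jp, Nat.lt_of_succ_lt hj⟩ : Fin k)]
      · rw [hS]
        simp [Matrix.mul_apply, Matrix.mulVec, dotProduct]
      · intro l _ hl
        rw [hS]
        have hne : ¬ ((l : ℕ) + 1 = ((⟨jp + 1, hj⟩ : Fin k) : ℕ)) := by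
          simp only [Fin.val_mk]
          intro hcond
          exact hl (Fin.ext (by simp only [Fin.val_mk]; omega))
        rw [if_neg hne, mul_zero]
      · simp
  have hBterm : (B * e₁) x j = (if (j : ℕ) = 0 then B x 0 else 0) := by
    rw [Matrix.mul_apply]
    rw [Finset.sum_eq_single (0 : Fin 1)]
    · rw [he₁]; split_ifs <;> simp
    · intro l _ hl; exact absurd (Subsingleton.elim l 0) hl
    · simp
  have hD : (E * R * Matrix.diagonal c) x j = (E * R) x j * c j := by
    rw [Matrix.mul_diagonal]
  rw [Matrix.add_apply, Matrix.add_apply, hSterm, hBterm, hD]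
  split_ifs with h
  · rw [dif_pos h] at key
    linear_combination -key
  · rw [dif_neg h] at key
    linear_combination -key

/-- The generalized controllability matrices `R₁, R₂` of a two-mode LSS, built
column-wise by the resolvent recursion (odd right points `a j = λ_{2j-1}` for mode 1,
even right points `b j = λ_{2j}` for mode 2), satisfy the coupled Sylvester equations
`A₁ R₁ + K₂ R₂ S + B₁ e₁ᵀ = E₁ R₁ Λ₁` and `A₂ R₂ + K₁ R₁ S + B₂ e₁ᵀ = E₂ R₂ Λ₂`,
where `S` is the upper-shift nilpotent matrix. -/
theorem lss_controllability_sylvester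
    {n₁ n₂ k : ℕ}
    (E₁ A₁ : Matrix (Fin n₁) (Fin n₁) ℂ) (E₂ A₂ : Matrix (Fin n₂) (Fin n₂) ℂ)
    (B₁ : Matrix (Fin n₁) (Fin 1) ℂ) (B₂ : Matrix (Fin n₂) (Fin 1) ℂ)
    (K₁ : Matrix (Fin n₂) (Fin n₁) ℂ) (K₂ : Matrix (Fin n₁) (Fin n₂) ℂ)
    (a b : Fin k → ℂ)
    (ha : ∀ j, IsUnit (a j • E₁ - A₁)) (hb : ∀ j, IsUnit (b j • E₂ - A₂))
    (R₁ : Matrix (Fin n₁) (Fin k) ℂ) (R₂ : Matrix (Fin n₂) (Fin k) ℂ)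
    (hk : 0 < k)
    (hR₁0 : ∀ x, R₁ x ⟨0, hk⟩ = ((a ⟨0, hk⟩ • E₁ - A₁)⁻¹ * B₁) x 0)
    (hR₂0 : ∀ x, R₂ x ⟨0, hk⟩ = ((b ⟨0, hk⟩ • E₂ - A₂)⁻¹ * B₂) x 0)
    (hR₁s : ∀ (j : ℕ) (h : j + 1 < k) (x : Fin n₁),
      R₁ x ⟨j + 1, h⟩ =
        (((a ⟨j + 1, h⟩ • E₁ - A₁)⁻¹ * K₂) *ᵥ (fun y => R₂ y ⟨j, Nat.lt_of_succ_lt h⟩)) x)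
    (hR₂s : ∀ (j : ℕ) (h : j + 1 < k) (x : Fin n₂),
      R₂ x ⟨j + 1, h⟩ =
        (((b ⟨j + 1, h⟩ • E₂ - A₂)⁻¹ * K₁) *ᵥ (fun y => R₁ y ⟨j, Nat.lt_of_succ_lt h⟩)) x)
    (S : Matrix (Fin k) (Fin k) ℂ)
    (hS : ∀ i j : Fin k, S i j = if (i : ℕ) + 1 = (j : ℕ) then 1 else 0)
    (e₁ : Matrix (Fin 1) (Fin k) ℂ)
    (he₁ : ∀ j : Fin k, e₁ 0 j = if (j : ℕ) = 0 then 1 else 0) :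
    A₁ * R₁ + K₂ * R₂ * S + B₁ * e₁ = E₁ * R₁ * Matrix.diagonal a ∧
    A₂ * R₂ + K₁ * R₁ * S + B₂ * e₁ = E₂ * R₂ * Matrix.diagonal b := by
  exact ⟨sylv_aux E₁ A₁ B₁ K₂ a ha R₁ R₂ hk hR₁0 hR₁s S hS e₁ he₁,
         sylv_aux E₂ A₂ B₂ K₁ b hb R₂ R₁ hk hR₂0 hR₂s S hS e₁ he₁⟩
end

section
/- The generalized observability matrices O_1, O_2 of a two-mode LSS, built row-wise by the recursion O_1^{(1)} = C_1 Φ_1(μ_1), O_2^{(1)} = C_2 Φ_2(μ_2), O_1^{(j)} = O_2^{(j-1)} K_1 Φ_1(μ_{2j-1}), O_2^{(j)} = O_1^{(j-1)} K_2 Φ_2(μ_{2j}) for j = 2,...,k, satisfy the coupled Sylvester equations O_1 A_1 + S^T O_2 K_1 + e_1 C_1 = M_1 O_1 E_1 and O_2 A_2 + S^T O_1 K_2 + e_1 C_2 = M_2 O_2 E_2, where M_1 = diag(μ_1, μ_3, ..., μ_{2k-1}), M_2 = diag(μ_2, μ_4, ..., μ_{2k}), and S is the k×k upper-shift nilpotent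 matrix. -/
open Matrix

lemma lss_row_step {n : ℕ} (M : Matrix (Fin n) (Fin n) ℂ) (hM : IsUnit M)
    (w r : Fin n → ℂ) (hr : ∀ x, r x = (w ᵥ* M⁻¹) x) :
    ∀ x, (r ᵥ* M) x = w x := by
  have h : r = w ᵥ* M⁻¹ := funext hr
  have h2 : M⁻¹ * M = 1 := Matrix.nonsing_inv_mul M ((Matrix.isUnit_iff_isUnit_det M).mp hM)
  intro x
  rw [h, Matrix.vecMul_vecMul, h2, Matrix.vecMul_one]

lemma lss_one_mode {n m k : ℕ}
    (E A : Matrix (Fin n) (Fin n) ℂ)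
    (C : Matrix (Fin 1) (Fin n) ℂ)
    (K : Matrix (Fin m) (Fin n) ℂ)
    (c : Fin k → ℂ)
    (hc : ∀ j, IsUnit (c j • E - A))
    (O : Matrix (Fin k) (Fin n) ℂ) (P : Matrix (Fin k) (Fin m) ℂ)
    (hk : 0 < k)
    (hO0 : ∀ x, O ⟨0, hk⟩ x = (C * (c ⟨0, hk⟩ • E - A)⁻¹) 0 x)
    (hOs : ∀ (j : ℕ) (h : j + 1 < k) (x : Fin n),
      O ⟨j + 1, h⟩ x =
        ((fun y => P ⟨j, Nat.lt_of_succ_lt h⟩ y) ᵥ* (K * (c ⟨j + 1, h⟩ • E - A)⁻¹)) x)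
    (S : Matrix (Fin k) (Fin k) ℂ)
    (hS : ∀ i j : Fin k, S i j = if (i : ℕ) + 1 = (j : ℕ) then 1 else 0)
    (e₁ : Matrix (Fin k) (Fin 1) ℂ)
    (he₁ : ∀ j : Fin k, e₁ j 0 = if (j : ℕ) = 0 then 1 else 0) :
    O * A + Sᵀ * P * K + e₁ * C = Matrix.diagonal c * O * E := by
  ext i x
  -- entrywise identity for the resolvent part:
  have hrow : ∀ (i : Fin k) (w : Fin n → ℂ),
      (∀ x, O i x = (w ᵥ* (c i • E - A)⁻¹) x) →
      (Matrix.diagonal c * O * E) i x - (O * A) i x = w x := by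
    intro i w hw
    have := lss_row_step (c i • E - A) (hc i) w (fun y => O i y) hw x
    rw [← this]
    simp [Matrix.mul_apply, Matrix.vecMul, dotProduct, Matrix.diagonal,
      Matrix.sub_apply, Matrix.smul_apply, sub_mul, mul_sub, Finset.sum_sub_distrib,
      Finset.mul_sum, mul_assoc, mul_comm, mul_left_comm]
  obtain ⟨i, hi⟩ := i
  cases i with
  | zero =>
    have h0 : (Matrix.diagonal c * O * E) ⟨0, hi⟩ x - (O * A) ⟨0, hi⟩ x = C 0 x := by
      apply hrow ⟨0, hi⟩ (fun y => C 0 y)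
      intro x
      rw [hO0 x]
      simp [Matrix.mul_apply, Matrix.vecMul, dotProduct]
    have hshift : (Sᵀ * P * K) ⟨0, hi⟩ x = 0 := by
      simp [Matrix.mul_apply, Matrix.transpose_apply, hS]
    have he : (e₁ * C) ⟨0, hi⟩ x = C 0 x := by
      simp [Matrix.mul_apply, he₁, Fin.sum_univ_succ]
    simp only [Matrix.add_apply, hshift, he]
    linear_combination -h0
  | succ j =>
    have hj : j < k := Nat.lt_of_succ_lt hi
    have h0 : (Matrix.diagonal c * O * E) ⟨j + 1, hi⟩ x - (O * A) ⟨j + 1, hi⟩ x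
        = ((fun y => P ⟨j, hj⟩ y) ᵥ* K) x := by
      apply hrow ⟨j + 1, hi⟩
      intro x
      rw [hOs j hi x, ← Matrix.vecMul_vecMul]
    have hSP : ∀ a, (Sᵀ * P) ⟨j + 1, hi⟩ a = P ⟨j, hj⟩ a := by
      intro a
      simp only [Matrix.mul_apply, Matrix.transpose_apply, hS]
      rw [Finset.sum_eq_single (⟨j, hj⟩ : Fin k)]
      · simp
      · intro b _ hb
        rw [if_neg, zero_mul]
        intro hcontr
        exact hb (Fin.ext (by simpa using hcontr))
      · simp
    have hshift : (Sᵀ * P * K) ⟨j + 1, hi⟩ x = ((fun y => P ⟨j, hj⟩ y) ᵥ* K) x := by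
      simp [Matrix.mul_apply, hSP, Matrix.vecMul, dotProduct]
    have he : (e₁ * C) ⟨j + 1, hi⟩ x = 0 := by
      simp [Matrix.mul_apply, he₁, Fin.sum_univ_succ]
    simp only [Matrix.add_apply, hshift, he]
    linear_combination -h0

/-- The generalized observability matrices `O₁, O₂` of a two-mode LSS, built
row-wise by the resolvent recursion (odd left points `c j = μ_{2j-1}` for mode 1,
even left points `d j = μ_{2j}` for mode 2), satisfy the coupled Sylvester equations
`O₁ A₁ + Sᵀ O₂ K₁ + e₁ C₁ = M₁ O₁ E₁` and `O₂ A₂ + Sᵀ O₁ K₂ + e₁ C₂ = M₂ O₂ E₂`,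
where `S` is the upper-shift nilpotent matrix and `e₁` the first standard basis column. -/
theorem lss_observability_sylvester
    {n₁ n₂ k : ℕ}
    (E₁ A₁ : Matrix (Fin n₁) (Fin n₁) ℂ) (E₂ A₂ : Matrix (Fin n₂) (Fin n₂) ℂ)
    (C₁ : Matrix (Fin 1) (Fin n₁) ℂ) (C₂ : Matrix (Fin 1) (Fin n₂) ℂ)
    (K₁ : Matrix (Fin n₂) (Fin n₁) ℂ) (K₂ : Matrix (Fin n₁) (Fin n₂) ℂ)
    (c d : Fin k → ℂ)
    (hc : ∀ j, IsUnit (c j • E₁ - A₁)) (hd : ∀ j, IsUnit (d j • E₂ - A₂))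
    (O₁ : Matrix (Fin k) (Fin n₁) ℂ) (O₂ : Matrix (Fin k) (Fin n₂) ℂ)
    (hk : 0 < k)
    (hO₁0 : ∀ x, O₁ ⟨0, hk⟩ x = (C₁ * (c ⟨0, hk⟩ • E₁ - A₁)⁻¹) 0 x)
    (hO₂0 : ∀ x, O₂ ⟨0, hk⟩ x = (C₂ * (d ⟨0, hk⟩ • E₂ - A₂)⁻¹) 0 x)
    (hO₁s : ∀ (j : ℕ) (h : j + 1 < k) (x : Fin n₁),
      O₁ ⟨j + 1, h⟩ x =
        ((fun y => O₂ ⟨j, Nat.lt_of_succ_lt h⟩ y) ᵥ* (K₁ * (c ⟨j + 1, h⟩ • E₁ - A₁)⁻¹)) x)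
    (hO₂s : ∀ (j : ℕ) (h : j + 1 < k) (x : Fin n₂),
      O₂ ⟨j + 1, h⟩ x =
        ((fun y => O₁ ⟨j, Nat.lt_of_succ_lt h⟩ y) ᵥ* (K₂ * (d ⟨j + 1, h⟩ • E₂ - A₂)⁻¹)) x)
    (S : Matrix (Fin k) (Fin k) ℂ)
    (hS : ∀ i j : Fin k, S i j = if (i : ℕ) + 1 = (j : ℕ) then 1 else 0)
    (e₁ : Matrix (Fin k) (Fin 1) ℂ)
    (he₁ : ∀ j : Fin k, e₁ j 0 = if (j : ℕ) = 0 then 1 else 0) :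
    O₁ * A₁ + Sᵀ * O₂ * K₁ + e₁ * C₁ = Matrix.diagonal c * O₁ * E₁ ∧
    O₂ * A₂ + Sᵀ * O₁ * K₂ + e₁ * C₂ = Matrix.diagonal d * O₂ * E₂ :=
  ⟨lss_one_mode E₁ A₁ C₁ K₁ c hc O₁ O₂ hk hO₁0 hO₁s S hS e₁ he₁,
   lss_one_mode E₂ A₂ C₂ K₂ d hd O₂ O₁ hk hO₂0 hO₂s S hS e₁ he₁⟩
end

section
/- Given the coupled Sylvester equations for the controllability matrices of a two-mode LSS, the Loewner matrix L_1 = -O_1 E_1 R_1 and shifted Loewner matrix Ls_1 = -O_1 A_1 R_1 satisfy Ls_1 = L_1 Λ_1 + V_1 R_row + Ξ_2 S_R, where V_1 = O_1 B_1, Ξ_2 = O_1 K_2 R_2, R_row is the 0/1 row vector selecting initial columns, and S_R the block shift matrix. -/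
open Matrix

/-- From the coupled Sylvester equation for the controllability matrices of a
two-mode LSS, the Loewner matrix `L₁ = -O₁ E₁ R₁` and shifted Loewner matrix
`Ls₁ = -O₁ A₁ R₁` satisfy `Ls₁ = L₁ Λ₁ + V₁ R_row + Ξ₂ S_R` with `V₁ = O₁ B₁`
and `Ξ₂ = O₁ K₂ R₂`. -/
theorem lss_loewner_right_relation
    {n₁ n₂ k ℓ : ℕ}
    (E₁ A₁ : Matrix (Fin n₁) (Fin n₁) ℂ)
    (B₁ : Matrix (Fin n₁) (Fin 1) ℂ)
    (K₂ : Matrix (Fin n₁) (Fin n₂) ℂ)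
    (R₁ : Matrix (Fin n₁) (Fin k) ℂ) (R₂ : Matrix (Fin n₂) (Fin k) ℂ)
    (SR : Matrix (Fin k) (Fin k) ℂ) (Rrow : Matrix (Fin 1) (Fin k) ℂ)
    (Λ₁ : Fin k → ℂ)
    (hSylv : A₁ * R₁ + K₂ * R₂ * SR + B₁ * Rrow = E₁ * R₁ * Matrix.diagonal Λ₁)
    (O₁ : Matrix (Fin ℓ) (Fin n₁) ℂ)
    (L₁ Ls₁ : Matrix (Fin ℓ) (Fin k) ℂ)
    (hL₁ : L₁ = -(O₁ * E₁ * R₁)) (hLs₁ : Ls₁ = -(O₁ * A₁ * R₁))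
    (V₁ : Matrix (Fin ℓ) (Fin 1) ℂ) (hV₁ : V₁ = O₁ * B₁)
    (Ξ₂ : Matrix (Fin ℓ) (Fin k) ℂ) (hΞ₂ : Ξ₂ = O₁ * K₂ * R₂) :
    Ls₁ = L₁ * Matrix.diagonal Λ₁ + V₁ * Rrow + Ξ₂ * SR := by
  subst hL₁ hLs₁ hV₁ hΞ₂
  have h := congrArg (O₁ * ·) hSylv
  simp only [Matrix.mul_add, ← Matrix.mul_assoc] at h
  rw [Matrix.neg_mul, ← h]; abel
end

section
/- Interpolation property of the projected realization: if R_1 ∈ ℂ^{n×k} satisfies (λ_1 E_1 - A_1) R_1 e_1 = B_1 and the projected matrices are Ê_1 = Y^T E_1 R_1, Â_1 = Y^T A_1 R_1, B̂_1 = Y^T B_1 for some Y ∈ ℂ^{n×k} such that λ_1 Ê_1 - Â_1 is invertible, then (λ_1 Ê_1 - Â_1)^{-1} B̂_1 = e_1, where e_1 is the first standard basis vector of ℂ^k. -/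
open Matrix

/-- Interpolation property of the projected realization: if the first column of
`R₁` satisfies `(λ₁ E₁ - A₁) R₁ e₁ = B₁` and `Ê₁ = Yᵀ E₁ R₁`, `Â₁ = Yᵀ A₁ R₁`,
`B̂₁ = Yᵀ B₁` with `λ₁ Ê₁ - Â₁` invertible, then `(λ₁ Ê₁ - Â₁)⁻¹ B̂₁ = e₁`. -/
theorem projected_right_interpolation
    {n k : ℕ}
    (E₁ A₁ : Matrix (Fin n) (Fin n) ℂ) (B₁ : Matrix (Fin n) (Fin 1) ℂ)
    (lam₁ : ℂ) (hinv : IsUnit (lam₁ • E₁ - A₁))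
    (R₁ : Matrix (Fin n) (Fin k) ℂ)
    (e₁ : Matrix (Fin k) (Fin 1) ℂ)
    (he₁ : ∀ j : Fin k, e₁ j 0 = if (j : ℕ) = 0 then 1 else 0)
    (hcol : (lam₁ • E₁ - A₁) * R₁ * e₁ = B₁)
    (Y : Matrix (Fin n) (Fin k) ℂ)
    (Eh₁ Ah₁ : Matrix (Fin k) (Fin k) ℂ) (Bh₁ : Matrix (Fin k) (Fin 1) ℂ)
    (hEh : Eh₁ = Yᵀ * E₁ * R₁) (hAh : Ah₁ = Yᵀ * A₁ * R₁) (hBh : Bh₁ = Yᵀ * B₁)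
    (hinvh : IsUnit (lam₁ • Eh₁ - Ah₁)) :
    (lam₁ • Eh₁ - Ah₁)⁻¹ * Bh₁ = e₁ := by
  have key : lam₁ • Eh₁ - Ah₁ = Yᵀ * ((lam₁ • E₁ - A₁) * R₁) := by
    subst hEh hAh
    simp [Matrix.mul_sub, Matrix.sub_mul, Matrix.mul_smul, Matrix.smul_mul, Matrix.mul_assoc]
  have hB : Bh₁ = (lam₁ • Eh₁ - Ah₁) * e₁ := by
    rw [key, hBh, ← hcol]
    rw [Matrix.mul_assoc, Matrix.mul_assoc, Matrix.mul_assoc]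
  rw [hB, ← Matrix.mul_assoc,
    Matrix.nonsing_inv_mul _ ((Matrix.isUnit_iff_isUnit_det _).mp hinvh), Matrix.one_mul]
end

section
/- Dual interpolation property of the projected realization: if O_1 ∈ ℂ^{k×n} satisfies e_1^T O_1 = C_1 (μ_1 E_1 - A_1)^{-1}, i.e. its first row is C_1 Φ_1(μ_1), and the projected matrices are Ê_1 = O_1 E_1 X, Â_1 = O_1 A_1 X, Ĉ_1 = C_1 X for some X ∈ ℂ^{n×k} with μ_1 Ê_1 - Â_1 invertible, then Ĉ_1 (μ_1 Ê_1 - Â_1)^{-1} = e_1^T. -/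
open Matrix

/-- Dual interpolation property of the projected realization: if the first row of
`O₁` is `C₁ (μ₁ E₁ - A₁)⁻¹` and `Ê₁ = O₁ E₁ X`, `Â₁ = O₁ A₁ X`, `Ĉ₁ = C₁ X` with
`μ₁ Ê₁ - Â₁` invertible, then `Ĉ₁ (μ₁ Ê₁ - Â₁)⁻¹ = e₁ᵀ`. -/
theorem projected_left_interpolation
    {n k : ℕ}
    (E₁ A₁ : Matrix (Fin n) (Fin n) ℂ) (C₁ : Matrix (Fin 1) (Fin n) ℂ)
    (μ₁ : ℂ) (hinv : IsUnit (μ₁ • E₁ - A₁))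
    (O₁ : Matrix (Fin k) (Fin n) ℂ)
    (e₁ : Matrix (Fin 1) (Fin k) ℂ)
    (he₁ : ∀ j : Fin k, e₁ 0 j = if (j : ℕ) = 0 then 1 else 0)
    (hrow : e₁ * O₁ = C₁ * (μ₁ • E₁ - A₁)⁻¹)
    (X : Matrix (Fin n) (Fin k) ℂ)
    (Eh₁ Ah₁ : Matrix (Fin k) (Fin k) ℂ) (Ch₁ : Matrix (Fin 1) (Fin k) ℂ)
    (hEh : Eh₁ = O₁ * E₁ * X) (hAh : Ah₁ = O₁ * A₁ * X) (hCh : Ch₁ = C₁ * X)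
    (hinvh : IsUnit (μ₁ • Eh₁ - Ah₁)) :
    Ch₁ * (μ₁ • Eh₁ - Ah₁)⁻¹ = e₁ := by
  have key : e₁ * (μ₁ • Eh₁ - Ah₁) = Ch₁ := by
    have h1 : μ₁ • Eh₁ - Ah₁ = O₁ * ((μ₁ • E₁ - A₁) * X) := by
      subst hEh hAh
      rw [Matrix.sub_mul, Matrix.smul_mul, Matrix.mul_assoc, Matrix.mul_assoc,
        Matrix.mul_sub, Matrix.mul_smul]
    rw [h1, ← Matrix.mul_assoc, hrow, ← Matrix.mul_assoc, Matrix.mul_assoc C₁,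
      Matrix.nonsing_inv_mul _ ((Matrix.isUnit_iff_isUnit_det _).mp hinv),
      Matrix.mul_one, hCh]
  calc Ch₁ * (μ₁ • Eh₁ - Ah₁)⁻¹ = e₁ * ((μ₁ • Eh₁ - Ah₁) * (μ₁ • Eh₁ - Ah₁)⁻¹) := by
        rw [← key, Matrix.mul_assoc]
    _ = e₁ := by
        rw [Matrix.mul_nonsing_inv _ ((Matrix.isUnit_iff_isUnit_det _).mp hinvh), Matrix.mul_one]
end

section
/- Matching of mixed moments: in the projected two-mode LSS realization with X_j = R_j and Y_j^T = O_j (all square and invertible), for the mixed second-level transfer function one has Ĥ_{1,2}(μ_1, λ_2) = Ĉ_1 (μ_1 Ê_1 - Â_1)^{-1} K̂_2 (λ_2 Ê_2 - Â_2)^{-1} B̂_2 = C_1 Φ_1(μ_1) K_2 Φ_2(λ_2) B_2 = H_{1,2}(μ_1, λ_2), provided the first row of O_1 equals C_1 Φ_1(μ_1), the first column of R_2 equals Φ_2(λ_2) B_2, and K̂_2 = O_1 K_2 R_2. -/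
open Matrix

/-- Matching of mixed moments: in the projected two-mode LSS realization with
`X_j = R_j`, `Y_jᵀ = O_j` square and invertible, the mixed second-level transfer
function is matched:
`Ĉ₁ (μ₁ Ê₁ - Â₁)⁻¹ K̂₂ (λ₂ Ê₂ - Â₂)⁻¹ B̂₂ = C₁ Φ₁(μ₁) K₂ Φ₂(λ₂) B₂`,
provided `Ĉ₁ (μ₁ Ê₁ - Â₁)⁻¹ = e₁ᵀ`, the first row of `O₁` equals `C₁ Φ₁(μ₁)`,
the first column of `R₂` equals `Φ₂(λ₂) B₂`, and `K̂₂ = O₁ K₂ R₂`. -/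
theorem lss_mixed_moment_matching
    {n₁ n₂ : ℕ}
    (E₁ A₁ : Matrix (Fin n₁) (Fin n₁) ℂ) (E₂ A₂ : Matrix (Fin n₂) (Fin n₂) ℂ)
    (B₂ : Matrix (Fin n₂) (Fin 1) ℂ)
    (C₁ : Matrix (Fin 1) (Fin n₁) ℂ)
    (K₂ : Matrix (Fin n₁) (Fin n₂) ℂ)
    (μ₁ lam₂ : ℂ)
    (hinv₁ : IsUnit (μ₁ • E₁ - A₁)) (hinv₂ : IsUnit (lam₂ • E₂ - A₂))
    (O₁ R₁ : Matrix (Fin n₁) (Fin n₁) ℂ) (O₂ R₂ : Matrix (Fin n₂) (Fin n₂) ℂ)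
    (hO₁ : IsUnit O₁) (hR₁ : IsUnit R₁) (hO₂ : IsUnit O₂) (hR₂ : IsUnit R₂)
    (e₁ : Matrix (Fin 1) (Fin n₁) ℂ)
    (he₁ : ∀ j : Fin n₁, e₁ 0 j = if (j : ℕ) = 0 then 1 else 0)
    (f₁ : Matrix (Fin n₂) (Fin 1) ℂ)
    (hf₁ : ∀ j : Fin n₂, f₁ j 0 = if (j : ℕ) = 0 then 1 else 0)
    (hrowO₁ : e₁ * O₁ = C₁ * (μ₁ • E₁ - A₁)⁻¹)
    (hcolR₂ : R₂ * f₁ = (lam₂ • E₂ - A₂)⁻¹ * B₂)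
    (Eh₁ Ah₁ : Matrix (Fin n₁) (Fin n₁) ℂ) (Eh₂ Ah₂ : Matrix (Fin n₂) (Fin n₂) ℂ)
    (Bh₂ : Matrix (Fin n₂) (Fin 1) ℂ) (Ch₁ : Matrix (Fin 1) (Fin n₁) ℂ)
    (Kh₂ : Matrix (Fin n₁) (Fin n₂) ℂ)
    (hEh₁ : Eh₁ = O₁ * E₁ * R₁) (hAh₁ : Ah₁ = O₁ * A₁ * R₁)
    (hEh₂ : Eh₂ = O₂ * E₂ * R₂) (hAh₂ : Ah₂ = O₂ * A₂ * R₂)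
    (hBh₂ : Bh₂ = O₂ * B₂) (hCh₁ : Ch₁ = C₁ * R₁)
    (hKh₂ : Kh₂ = O₁ * K₂ * R₂)
    (hinvh₁ : IsUnit (μ₁ • Eh₁ - Ah₁)) (hinvh₂ : IsUnit (lam₂ • Eh₂ - Ah₂))
    (hproj : Ch₁ * (μ₁ • Eh₁ - Ah₁)⁻¹ = e₁) :
    Ch₁ * (μ₁ • Eh₁ - Ah₁)⁻¹ * Kh₂ * (lam₂ • Eh₂ - Ah₂)⁻¹ * Bh₂ =
      C₁ * (μ₁ • E₁ - A₁)⁻¹ * K₂ * (lam₂ • E₂ - A₂)⁻¹ * B₂ := by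
  have hO₂d : IsUnit O₂.det := (Matrix.isUnit_iff_isUnit_det O₂).mp hO₂
  have hR₂d : IsUnit R₂.det := (Matrix.isUnit_iff_isUnit_det R₂).mp hR₂
  have hfac₂ : lam₂ • Eh₂ - Ah₂ = O₂ * (lam₂ • E₂ - A₂) * R₂ := by
    rw [hEh₂, hAh₂]
    simp [Matrix.mul_sub, Matrix.sub_mul, Matrix.mul_smul, Matrix.smul_mul]
  have hright : (lam₂ • Eh₂ - Ah₂)⁻¹ * Bh₂ = f₁ := by
    rw [hfac₂, Matrix.mul_inv_rev, Matrix.mul_inv_rev, hBh₂]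
    calc R₂⁻¹ * ((lam₂ • E₂ - A₂)⁻¹ * O₂⁻¹) * (O₂ * B₂)
        = R₂⁻¹ * ((lam₂ • E₂ - A₂)⁻¹ * (O₂⁻¹ * O₂ * B₂)) := by
          simp [Matrix.mul_assoc]
      _ = R₂⁻¹ * (R₂ * f₁) := by
          rw [Matrix.nonsing_inv_mul _ hO₂d, Matrix.one_mul, hcolR₂]
      _ = f₁ := by
          rw [← Matrix.mul_assoc, Matrix.nonsing_inv_mul _ hR₂d, Matrix.one_mul]
  calc Ch₁ * (μ₁ • Eh₁ - Ah₁)⁻¹ * Kh₂ * (lam₂ • Eh₂ - Ah₂)⁻¹ * Bh₂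
      = e₁ * Kh₂ * ((lam₂ • Eh₂ - Ah₂)⁻¹ * Bh₂) := by rw [hproj, Matrix.mul_assoc]
    _ = e₁ * (O₁ * K₂ * R₂) * f₁ := by rw [hright, hKh₂]
    _ = (e₁ * O₁) * K₂ * (R₂ * f₁) := by simp [Matrix.mul_assoc]
    _ = C₁ * (μ₁ • E₁ - A₁)⁻¹ * K₂ * ((lam₂ • E₂ - A₂)⁻¹ * B₂) := by
        rw [hrowO₁, hcolR₂]
    _ = C₁ * (μ₁ • E₁ - A₁)⁻¹ * K₂ * (lam₂ • E₂ - A₂)⁻¹ * B₂ := by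
        simp [Matrix.mul_assoc]
end

section
/- The 2×2 Loewner matrix of a two-mode LSS built from the data H_1(μ_1), H_1(λ_1), H_{1,2}(μ_1,λ_2), H_{1,2}(λ_3,λ_2), H_{2,1}(μ_2,μ_3), H_{2,1}(μ_2,λ_1), H_{2,1,2}(μ_2,μ_3,λ_2), H_{2,1,2}(μ_2,λ_3,λ_2) via the divided-difference formula L_1 = [ (H_1(μ_1)-H_1(λ_1))/(μ_1-λ_1), (H_{1,2}(μ_1,λ_2)-H_{1,2}(λ_3,λ_2))/(μ_1-λ_3) ; (H_{2,1}(μ_2,μ_3)-H_{2,1}(μ_2,λ_1))/(μ_3-λ_1), (H_{2,1,2}(μ_2,μ_3,λ_2)-H_{2,1,2}(μ_2,λ_3,λ_2))/(μ_3-λ_3) ] equals -O_1 E_1 R_1, where O_1 has rows C_1Φ_1(μ_1) and C_2Φ_2(μ_2)K_1Φ_1(μ_3), and R_1 has columns Φ_1(λ_1)B_1 and Φ_1(λ_3)K_2Φ_2(λ_2)B_2. -/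
open Matrix


lemma resolvent_diff {n : ℕ} (E A : Matrix (Fin n) (Fin n) ℂ) (a b : ℂ)
    (ha : IsUnit (a • E - A)) (hb : IsUnit (b • E - A)) :
    (a • E - A)⁻¹ - (b • E - A)⁻¹ = (b - a) • ((a • E - A)⁻¹ * E * (b • E - A)⁻¹) := by
  have ha' : IsUnit (a • E - A).det := (isUnit_iff_isUnit_det _).mp ha
  have hb' : IsUnit (b • E - A).det := (isUnit_iff_isUnit_det _).mp hb
  have key : (a • E - A)⁻¹ * ((b • E - A) - (a • E - A)) * (b • E - A)⁻¹
      = (a • E - A)⁻¹ - (b • E - A)⁻¹ := by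
    rw [Matrix.mul_sub, Matrix.sub_mul, mul_assoc ((a • E - A)⁻¹),
      Matrix.mul_nonsing_inv _ hb', mul_one, Matrix.nonsing_inv_mul _ ha', Matrix.one_mul]
  have h2 : (b • E - A) - (a • E - A) = (b - a) • E := by
    rw [sub_smul]; abel
  rw [← key, h2, mul_smul_comm, smul_mul_assoc]

lemma key_entry {n : ℕ} (E A : Matrix (Fin n) (Fin n) ℂ) (a b : ℂ)
    (ha : IsUnit (a • E - A)) (hb : IsUnit (b • E - A)) (hab : a ≠ b)
    (P : Matrix (Fin 1) (Fin n) ℂ) (Q : Matrix (Fin n) (Fin 1) ℂ) :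
    ((P * (a • E - A)⁻¹ * Q) 0 0 - (P * (b • E - A)⁻¹ * Q) 0 0) / (a - b)
      = -((P * (a • E - A)⁻¹ * E * ((b • E - A)⁻¹ * Q)) 0 0) := by
  have hm : P * (a • E - A)⁻¹ * Q - P * (b • E - A)⁻¹ * Q
      = (b - a) • (P * (a • E - A)⁻¹ * E * ((b • E - A)⁻¹ * Q)) := by
    calc P * (a • E - A)⁻¹ * Q - P * (b • E - A)⁻¹ * Q
        = P * ((a • E - A)⁻¹ - (b • E - A)⁻¹) * Q := by
          rw [Matrix.mul_sub, Matrix.sub_mul]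
      _ = (b - a) • (P * (a • E - A)⁻¹ * E * ((b • E - A)⁻¹ * Q)) := by
          rw [resolvent_diff E A a b ha hb]
          simp only [Matrix.mul_smul, Matrix.smul_mul]
          congr 1
          simp only [Matrix.mul_assoc]
  rw [← Matrix.sub_apply, hm, Matrix.smul_apply, smul_eq_mul]
  have h : a - b ≠ 0 := sub_ne_zero.mpr hab
  field_simp
  ring

/-- The 2×2 Loewner matrix of a two-mode LSS, built by divided differences of the
generalized transfer-function samples
`H₁(μ₁), H₁(λ₁), H₁₂(μ₁,λ₂), H₁₂(λ₃,λ₂), H₂₁(μ₂,μ₃), H₂₁(μ₂,λ₁), H₂₁₂(μ₂,μ₃,λ₂),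
H₂₁₂(μ₂,λ₃,λ₂)`, equals `-O₁ E₁ R₁`, where `O₁` has rows `C₁Φ₁(μ₁)` and
`C₂Φ₂(μ₂)K₁Φ₁(μ₃)`, and `R₁` has columns `Φ₁(λ₁)B₁` and `Φ₁(λ₃)K₂Φ₂(λ₂)B₂`. -/
theorem lss_loewner_2x2_factorization
    {n₁ n₂ : ℕ}
    (E₁ A₁ : Matrix (Fin n₁) (Fin n₁) ℂ) (E₂ A₂ : Matrix (Fin n₂) (Fin n₂) ℂ)
    (B₁ : Matrix (Fin n₁) (Fin 1) ℂ) (B₂ : Matrix (Fin n₂) (Fin 1) ℂ)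
    (C₁ : Matrix (Fin 1) (Fin n₁) ℂ) (C₂ : Matrix (Fin 1) (Fin n₂) ℂ)
    (K₁ : Matrix (Fin n₂) (Fin n₁) ℂ) (K₂ : Matrix (Fin n₁) (Fin n₂) ℂ)
    (μ₁ μ₂ μ₃ lam₁ lam₂ lam₃ : ℂ)
    (hμ₁ : IsUnit (μ₁ • E₁ - A₁)) (hμ₂ : IsUnit (μ₂ • E₂ - A₂))
    (hμ₃ : IsUnit (μ₃ • E₁ - A₁))
    (hl₁ : IsUnit (lam₁ • E₁ - A₁)) (hl₂ : IsUnit (lam₂ • E₂ - A₂))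
    (hl₃ : IsUnit (lam₃ • E₁ - A₁))
    (h₁₁ : μ₁ ≠ lam₁) (h₁₃ : μ₁ ≠ lam₃) (h₃₁ : μ₃ ≠ lam₁) (h₃₃ : μ₃ ≠ lam₃)
    -- generalized transfer functions (SISO, scalar-valued)
    (H₁ : ℂ → ℂ) (hH₁ : ∀ s, H₁ s = (C₁ * (s • E₁ - A₁)⁻¹ * B₁) 0 0)
    (H₁₂ : ℂ → ℂ → ℂ)
    (hH₁₂ : ∀ s₁ s₂, H₁₂ s₁ s₂ = (C₁ * (s₁ • E₁ - A₁)⁻¹ * K₂ * (s₂ • E₂ - A₂)⁻¹ * B₂) 0 0)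
    (H₂₁ : ℂ → ℂ → ℂ)
    (hH₂₁ : ∀ s₁ s₂, H₂₁ s₁ s₂ = (C₂ * (s₁ • E₂ - A₂)⁻¹ * K₁ * (s₂ • E₁ - A₁)⁻¹ * B₁) 0 0)
    (H₂₁₂ : ℂ → ℂ → ℂ → ℂ)
    (hH₂₁₂ : ∀ s₁ s₂ s₃, H₂₁₂ s₁ s₂ s₃ =
      (C₂ * (s₁ • E₂ - A₂)⁻¹ * K₁ * (s₂ • E₁ - A₁)⁻¹ * K₂ * (s₃ • E₂ - A₂)⁻¹ * B₂) 0 0)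
    -- generalized observability and controllability matrices of mode 1
    (O₁ : Matrix (Fin 2) (Fin n₁) ℂ)
    (hO₁0 : ∀ x, O₁ 0 x = (C₁ * (μ₁ • E₁ - A₁)⁻¹) 0 x)
    (hO₁1 : ∀ x, O₁ 1 x = (C₂ * (μ₂ • E₂ - A₂)⁻¹ * K₁ * (μ₃ • E₁ - A₁)⁻¹) 0 x)
    (R₁ : Matrix (Fin n₁) (Fin 2) ℂ)
    (hR₁0 : ∀ x, R₁ x 0 = ((lam₁ • E₁ - A₁)⁻¹ * B₁) x 0)
    (hR₁1 : ∀ x, R₁ x 1 = ((lam₃ • E₁ - A₁)⁻¹ * K₂ * (lam₂ • E₂ - A₂)⁻¹ * B₂) x 0) :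
    !![(H₁ μ₁ - H₁ lam₁) / (μ₁ - lam₁), (H₁₂ μ₁ lam₂ - H₁₂ lam₃ lam₂) / (μ₁ - lam₃);
       (H₂₁ μ₂ μ₃ - H₂₁ μ₂ lam₁) / (μ₃ - lam₁),
       (H₂₁₂ μ₂ μ₃ lam₂ - H₂₁₂ μ₂ lam₃ lam₂) / (μ₃ - lam₃)] =
      -(O₁ * E₁ * R₁) := by
  have hrow0 : ∀ {p : ℕ} (M : Matrix (Fin n₁) (Fin p) ℂ) (j),
      (O₁ * M) 0 j = (C₁ * (μ₁ • E₁ - A₁)⁻¹ * M) 0 j := by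
    intro p M j
    rw [Matrix.mul_apply, Matrix.mul_apply]
    exact Finset.sum_congr rfl fun x _ => by rw [hO₁0]
  have hrow1 : ∀ {p : ℕ} (M : Matrix (Fin n₁) (Fin p) ℂ) (j),
      (O₁ * M) 1 j = (C₂ * (μ₂ • E₂ - A₂)⁻¹ * K₁ * (μ₃ • E₁ - A₁)⁻¹ * M) 0 j := by
    intro p M j
    rw [Matrix.mul_apply, Matrix.mul_apply]
    exact Finset.sum_congr rfl fun x _ => by rw [hO₁1]
  have hcol0 : ∀ {m : ℕ} (M : Matrix (Fin m) (Fin n₁) ℂ) (i),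
      (M * R₁) i 0 = (M * ((lam₁ • E₁ - A₁)⁻¹ * B₁)) i 0 := by
    intro m M i
    rw [Matrix.mul_apply, Matrix.mul_apply]
    exact Finset.sum_congr rfl fun x _ => by rw [hR₁0]
  have hcol1 : ∀ {m : ℕ} (M : Matrix (Fin m) (Fin n₁) ℂ) (i),
      (M * R₁) i 1 = (M * ((lam₃ • E₁ - A₁)⁻¹ * K₂ * (lam₂ • E₂ - A₂)⁻¹ * B₂)) i 0 := by
    intro m M i
    rw [Matrix.mul_apply, Matrix.mul_apply]
    exact Finset.sum_congr rfl fun x _ => by rw [hR₁1]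
  ext i j
  fin_cases i <;> fin_cases j <;>
    simp only [Matrix.cons_val', Matrix.cons_val_zero, Matrix.cons_val_one, Matrix.head_cons,
      Matrix.head_fin_const, Matrix.empty_val', Matrix.cons_val_fin_one, Matrix.of_apply,
      Matrix.neg_apply, Fin.isValue, Fin.zero_eta, Fin.mk_one]
  · -- entry (0,0)
    have E00 : (O₁ * E₁ * R₁) 0 0
        = (C₁ * ((μ₁ • E₁ - A₁)⁻¹ * (E₁ * ((lam₁ • E₁ - A₁)⁻¹ * B₁)))) 0 0 := by
      rw [hcol0 (O₁ * E₁) 0, Matrix.mul_assoc O₁ E₁, hrow0]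
      simp only [Matrix.mul_assoc]
    rw [hH₁, hH₁, E00]
    have h := key_entry E₁ A₁ μ₁ lam₁ hμ₁ hl₁ h₁₁ C₁ B₁
    simp only [Matrix.mul_assoc] at h ⊢
    exact h
  · -- entry (0,1)
    have E01 : (O₁ * E₁ * R₁) 0 1
        = (C₁ * ((μ₁ • E₁ - A₁)⁻¹ * (E₁ * ((lam₃ • E₁ - A₁)⁻¹ *
            (K₂ * ((lam₂ • E₂ - A₂)⁻¹ * B₂)))))) 0 0 := by
      rw [hcol1 (O₁ * E₁) 0, Matrix.mul_assoc O₁ E₁, hrow0]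
      simp only [Matrix.mul_assoc]
    rw [hH₁₂, hH₁₂, E01]
    have h := key_entry E₁ A₁ μ₁ lam₃ hμ₁ hl₃ h₁₃ C₁
      (K₂ * ((lam₂ • E₂ - A₂)⁻¹ * B₂))
    simp only [Matrix.mul_assoc] at h ⊢
    exact h
  · -- entry (1,0)
    have E10 : (O₁ * E₁ * R₁) 1 0
        = (C₂ * ((μ₂ • E₂ - A₂)⁻¹ * (K₁ * ((μ₃ • E₁ - A₁)⁻¹ *
            (E₁ * ((lam₁ • E₁ - A₁)⁻¹ * B₁)))))) 0 0 := by
      rw [hcol0 (O₁ * E₁) 1, Matrix.mul_assoc O₁ E₁, hrow1]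
      simp only [Matrix.mul_assoc]
    rw [hH₂₁, hH₂₁, E10]
    have h := key_entry E₁ A₁ μ₃ lam₁ hμ₃ hl₁ h₃₁
      (C₂ * ((μ₂ • E₂ - A₂)⁻¹ * K₁)) B₁
    simp only [Matrix.mul_assoc] at h ⊢
    exact h
  · -- entry (1,1)
    have E11 : (O₁ * E₁ * R₁) 1 1
        = (C₂ * ((μ₂ • E₂ - A₂)⁻¹ * (K₁ * ((μ₃ • E₁ - A₁)⁻¹ *
            (E₁ * ((lam₃ • E₁ - A₁)⁻¹ * (K₂ * ((lam₂ • E₂ - A₂)⁻¹ * B₂)))))))) 0 0 := by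
      rw [hcol1 (O₁ * E₁) 1, Matrix.mul_assoc O₁ E₁, hrow1]
      simp only [Matrix.mul_assoc]
    rw [hH₂₁₂, hH₂₁₂, E11]
    have h := key_entry E₁ A₁ μ₃ lam₃ hμ₃ hl₃ h₃₃
      (C₂ * ((μ₂ • E₂ - A₂)⁻¹ * K₁)) (K₂ * ((lam₂ • E₂ - A₂)⁻¹ * B₂))
    simp only [Matrix.mul_assoc] at h ⊢
    exact h
end
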